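/- For every n ≥ 5, the commutator subgroup VB_n' of the virtual braid group VB_n is perfect: the commutator subgroup of VB_n' equals VB_n' itself (VB_n'' = VB_n'). -/

import Mathlib

/-!
Common setup: the virtual braid group `VB n` and the welded braid group `WB n`
as presented groups, together with the distinguished elements of their
commutator subgroups used in the paper
"Commutator subgroups of virtual and welded braid groups".

Generators: for `i : Fin (n-1)`, `Sum.inl i` represents σ_{i+1} and
`Sum.inr i` represents ρ_{i+1}.
-/

/-- The generating set of `VB n` (and `WB n`). -/
abbrev VBGen (n : ℕ) := (Fin (n - 1)) ⊕ (Fin (n - 1))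

/-- The free group letter σ_i, for `1 ≤ i ≤ n-1` (junk value `1` otherwise). -/
def fσ (n i : ℕ) : FreeGroup (VBGen n) :=
  if h : 1 ≤ i ∧ i - 1 < n - 1 then FreeGroup.of (Sum.inl ⟨i - 1, h.2⟩) else 1

/-- The free group letter ρ_i, for `1 ≤ i ≤ n-1` (junk value `1` otherwise). -/
def fρ (n i : ℕ) : FreeGroup (VBGen n) :=
  if h : 1 ≤ i ∧ i - 1 < n - 1 then FreeGroup.of (Sum.inr ⟨i - 1, h.2⟩) else 1

/-- The defining relators of the virtual braid group `VB n`. -/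
def vbRels (n : ℕ) : Set (FreeGroup (VBGen n)) :=
  {r | ∃ i j, 1 ≤ i ∧ i + 2 ≤ j ∧ j ≤ n - 1 ∧
      (r = fσ n i * fσ n j * (fσ n i)⁻¹ * (fσ n j)⁻¹ ∨
       r = fρ n i * fρ n j * (fρ n i)⁻¹ * (fρ n j)⁻¹ ∨
       r = fσ n i * fρ n j * (fσ n i)⁻¹ * (fρ n j)⁻¹ ∨
       r = fσ n j * fρ n i * (fσ n j)⁻¹ * (fρ n i)⁻¹)} ∪
  {r | ∃ i, 1 ≤ i ∧ i + 1 ≤ n - 1 ∧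
      (r = fσ n i * fσ n (i+1) * fσ n i * (fσ n (i+1))⁻¹ * (fσ n i)⁻¹ * (fσ n (i+1))⁻¹ ∨
       r = fρ n i * fρ n (i+1) * fρ n i * (fρ n (i+1))⁻¹ * (fρ n i)⁻¹ * (fρ n (i+1))⁻¹ ∨
       r = fρ n i * fρ n (i+1) * fσ n i * (fρ n (i+1))⁻¹ * (fρ n i)⁻¹ * (fσ n (i+1))⁻¹)} ∪
  {r | ∃ i, 1 ≤ i ∧ i ≤ n - 1 ∧ r = fρ n i * fρ n i}

/-- The virtual braid group on `n` strands. -/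
abbrev VB (n : ℕ) := PresentedGroup (vbRels n)

/-- The generator σ_i of `VB n`. -/
def vσ (n i : ℕ) : VB n := PresentedGroup.mk (vbRels n) (fσ n i)

/-- The generator ρ_i of `VB n`. -/
def vρ (n i : ℕ) : VB n := PresentedGroup.mk (vbRels n) (fρ n i)

/-- a_m = σ_1^m (ρ_1 σ_1 ρ_1 σ_1⁻¹) σ_1^{-m}. -/
def va (n : ℕ) (m : ℤ) : VB n :=
  (vσ n 1) ^ m * (vρ n 1 * vσ n 1 * vρ n 1 * (vσ n 1)⁻¹) * (vσ n 1) ^ (-m)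

/-- b_{m,ε} = σ_1^m (ρ_1^ε σ_2 ρ_1^ε σ_1⁻¹) σ_1^{-m}. -/
def vb (n : ℕ) (m : ℤ) (ε : ℕ) : VB n :=
  (vσ n 1) ^ m * ((vρ n 1) ^ ε * vσ n 2 * (vρ n 1) ^ ε * (vσ n 1)⁻¹) * (vσ n 1) ^ (-m)

/-- c_l = σ_l σ_1⁻¹. -/
def vc (n l : ℕ) : VB n := vσ n l * (vσ n 1)⁻¹

/-- f_{m,ε} = σ_1^m (ρ_1^ε ρ_2 ρ_1^{ε+1}) σ_1^{-m}; `f_m` is `vf n m 0`. -/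
def vf (n : ℕ) (m : ℤ) (ε : ℕ) : VB n :=
  (vσ n 1) ^ m * ((vρ n 1) ^ ε * vρ n 2 * (vρ n 1) ^ (ε + 1)) * (vσ n 1) ^ (-m)

/-- g_{m,l} = σ_1^m (ρ_l ρ_1) σ_1^{-m}. -/
def vg (n : ℕ) (m : ℤ) (l : ℕ) : VB n :=
  (vσ n 1) ^ m * (vρ n l * vρ n 1) * (vσ n 1) ^ (-m)

/-- The additional relators ρ_i σ_{i+1} σ_i (ρ_{i+1})⁻¹ σ_i⁻¹ σ_{i+1}⁻¹ of the
welded braid group. -/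
def wbExtraRels (n : ℕ) : Set (FreeGroup (VBGen n)) :=
  {r | ∃ i, 1 ≤ i ∧ i + 1 ≤ n - 1 ∧
      r = fρ n i * fσ n (i+1) * fσ n i * (fρ n (i+1))⁻¹ * (fσ n i)⁻¹ * (fσ n (i+1))⁻¹}

/-- The defining relators of the welded braid group `WB n`. -/
def wbRels (n : ℕ) : Set (FreeGroup (VBGen n)) := vbRels n ∪ wbExtraRels n

/-- The welded braid group on `n` strands. -/
abbrev WB (n : ℕ) := PresentedGroup (wbRels n)

/-- The generator σ_i of `WB n`. -/
def wσ (n i : ℕ) : WB n := PresentedGroup.mk (wbRels n) (fσ n i)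

/-- The generator ρ_i of `WB n`. -/
def wρ (n i : ℕ) : WB n := PresentedGroup.mk (wbRels n) (fρ n i)

/-- a_m in `WB n`. -/
def wa (n : ℕ) (m : ℤ) : WB n :=
  (wσ n 1) ^ m * (wρ n 1 * wσ n 1 * wρ n 1 * (wσ n 1)⁻¹) * (wσ n 1) ^ (-m)

/-- f_{m,ε} in `WB n`; `f_m` is `wf n m 0`. -/
def wf (n : ℕ) (m : ℤ) (ε : ℕ) : WB n :=
  (wσ n 1) ^ m * ((wρ n 1) ^ ε * wρ n 2 * (wρ n 1) ^ (ε + 1)) * (wσ n 1) ^ (-m)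

/-- c_l in `WB n`. -/
def wc (n l : ℕ) : WB n := wσ n l * (wσ n 1)⁻¹

/-- g_{m,l} in `WB n`. -/
def wg (n : ℕ) (m : ℤ) (l : ℕ) : WB n :=
  (wσ n 1) ^ m * (wρ n l * wρ n 1) * (wσ n 1) ^ (-m)


open scoped commutatorElement

section VBPerfAux

open Subgroup

private lemma vb_mk_rel {n : ℕ} {r : FreeGroup (VBGen n)} (h : r ∈ vbRels n) :
    PresentedGroup.mk (vbRels n) r = 1 :=
  (QuotientGroup.eq_one_iff r).mpr (Subgroup.subset_normalClosure h)

private lemma vρ_mul_self {n i : ℕ} (h1 : 1 ≤ i) (h2 : i ≤ n - 1) :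
    vρ n i * vρ n i = 1 := by
  have hm : (fρ n i * fρ n i) ∈ vbRels n := Set.mem_union_right _ ⟨i, h1, h2, rfl⟩
  have h := vb_mk_rel hm
  simpa [vρ, map_mul] using h

private lemma vρ_braid {n i : ℕ} (h1 : 1 ≤ i) (h2 : i + 1 ≤ n - 1) :
    vρ n i * vρ n (i+1) * vρ n i = vρ n (i+1) * vρ n i * vρ n (i+1) := by
  have hm : (fρ n i * fρ n (i+1) * fρ n i * (fρ n (i+1))⁻¹ * (fρ n i)⁻¹ * (fρ n (i+1))⁻¹)
      ∈ vbRels n :=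
    Set.mem_union_left _ (Set.mem_union_right _ ⟨i, h1, h2, Or.inr (Or.inl rfl)⟩)
  have h := vb_mk_rel hm
  simp only [map_mul, map_inv] at h
  have key : vρ n i * vρ n (i+1) * vρ n i =
      (vρ n i * vρ n (i+1) * vρ n i * (vρ n (i+1))⁻¹ * (vρ n i)⁻¹ * (vρ n (i+1))⁻¹) *
        (vρ n (i+1) * vρ n i * vρ n (i+1)) := by group
  rw [key, show PresentedGroup.mk (vbRels n) (fρ n i) = vρ n i from rfl] at *
  rw [show PresentedGroup.mk (vbRels n) (fρ n (i+1)) = vρ n (i+1) from rfl] at h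
  rw [h, one_mul]

private lemma vρσ_mixed {n i : ℕ} (h1 : 1 ≤ i) (h2 : i + 1 ≤ n - 1) :
    (vρ n i * vρ n (i+1)) * vσ n i = vσ n (i+1) * (vρ n i * vρ n (i+1)) := by
  have hm : (fρ n i * fρ n (i+1) * fσ n i * (fρ n (i+1))⁻¹ * (fρ n i)⁻¹ * (fσ n (i+1))⁻¹)
      ∈ vbRels n :=
    Set.mem_union_left _ (Set.mem_union_right _ ⟨i, h1, h2, Or.inr (Or.inr rfl)⟩)
  have h := vb_mk_rel hm
  simp only [map_mul, map_inv] at h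
  rw [show PresentedGroup.mk (vbRels n) (fρ n i) = vρ n i from rfl,
    show PresentedGroup.mk (vbRels n) (fρ n (i+1)) = vρ n (i+1) from rfl,
    show PresentedGroup.mk (vbRels n) (fσ n i) = vσ n i from rfl,
    show PresentedGroup.mk (vbRels n) (fσ n (i+1)) = vσ n (i+1) from rfl] at h
  have key : (vρ n i * vρ n (i+1)) * vσ n i =
      (vρ n i * vρ n (i+1) * vσ n i * (vρ n (i+1))⁻¹ * (vρ n i)⁻¹ * (vσ n (i+1))⁻¹) *
        (vσ n (i+1) * (vρ n i * vρ n (i+1))) := by group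
  rw [key, h, one_mul]

private lemma vρ_far {n i j : ℕ} (h1 : 1 ≤ i) (h2 : i + 2 ≤ j) (h3 : j ≤ n - 1) :
    vρ n i * vρ n j = vρ n j * vρ n i := by
  have hm : (fρ n i * fρ n j * (fρ n i)⁻¹ * (fρ n j)⁻¹) ∈ vbRels n :=
    Set.mem_union_left _ (Set.mem_union_left _ ⟨i, j, h1, h2, h3, Or.inr (Or.inl rfl)⟩)
  have h := vb_mk_rel hm
  simp only [map_mul, map_inv] at h
  rw [show PresentedGroup.mk (vbRels n) (fρ n i) = vρ n i from rfl,
    show PresentedGroup.mk (vbRels n) (fρ n j) = vρ n j from rfl] at h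
  have key : vρ n i * vρ n j =
      (vρ n i * vρ n j * (vρ n i)⁻¹ * (vρ n j)⁻¹) * (vρ n j * vρ n i) := by group
  rw [key, h, one_mul]

private lemma vσρ_far {n i j : ℕ} (h1 : 1 ≤ i) (h2 : i + 2 ≤ j) (h3 : j ≤ n - 1) :
    vσ n i * vρ n j = vρ n j * vσ n i := by
  have hm : (fσ n i * fρ n j * (fσ n i)⁻¹ * (fρ n j)⁻¹) ∈ vbRels n :=
    Set.mem_union_left _ (Set.mem_union_left _ ⟨i, j, h1, h2, h3, Or.inr (Or.inr (Or.inl rfl))⟩)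
  have h := vb_mk_rel hm
  simp only [map_mul, map_inv] at h
  rw [show PresentedGroup.mk (vbRels n) (fσ n i) = vσ n i from rfl,
    show PresentedGroup.mk (vbRels n) (fρ n j) = vρ n j from rfl] at h
  have key : vσ n i * vρ n j =
      (vσ n i * vρ n j * (vσ n i)⁻¹ * (vρ n j)⁻¹) * (vρ n j * vσ n i) := by group
  rw [key, h, one_mul]

/-- In any group, if `a`, `b` are involutions satisfying the braid relation, then
`(a*b)^3 = 1`. -/
private lemma dihedral_cube {G : Type*} [Group G] {a b : G} (ha : a * a = 1) (hb : b * b = 1)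
    (hbr : a * b * a = b * a * b) : (a * b) * (a * b) * (a * b) = 1 := by
  calc (a * b) * (a * b) * (a * b) = (a * b * a) * (b * a * b) := by group
    _ = (a * b * a) * (a * b * a) := by rw [hbr]
    _ = a * b * (a * a) * b * a := by group
    _ = a * b * 1 * b * a := by rw [ha]
    _ = a * (b * b) * a := by group
    _ = a * 1 * a := by rw [hb]
    _ = a * a := by group
    _ = 1 := ha

/-- In any group, if `a`, `b` are involutions satisfying the braid relation, then
`a * b` is a commutator. -/
private lemma prod_eq_commutator {G : Type*} [Group G] {a b : G} (ha : a * a = 1)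
    (hb : b * b = 1) (hbr : a * b * a = b * a * b) : a * b = ⁅b, a⁆ := by
  have ha' : a⁻¹ = a := inv_eq_of_mul_eq_one_left ha
  have hb' : b⁻¹ = b := inv_eq_of_mul_eq_one_left hb
  have h3 := dihedral_cube ha hb hbr
  have hc : ⁅b, a⁆ = (a * b)⁻¹ * (a * b)⁻¹ := by
    rw [commutatorElement_def, hb', ha', mul_inv_rev, ha', hb']
    group
  rw [hc]
  have h : (a * b)⁻¹ * (a * b)⁻¹ = (a * b)⁻¹ * (a * b)⁻¹ * ((a * b) * (a * b) * (a * b)) := by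
    rw [h3, mul_one]
  rw [h]
  group

/-- If `x`, `y` are commuting elements of order dividing 3 with `(x*y)^2 = 1`,
then `y = x⁻¹`. -/
private lemma cube_inv_of_sq {G : Type*} [Group G] {x y : G} (hx : x * x * x = 1)
    (hy : y * y * y = 1) (hsq : (x * y) * (x * y) = 1) (hc : x * y = y * x) : y = x⁻¹ := by
  have h2 : x * x * (y * y) = 1 := by
    calc x * x * (y * y) = x * (x * y) * y := by group
      _ = x * (y * x) * y := by rw [hc]
      _ = (x * y) * (x * y) := by group
      _ = 1 := hsq
  have h2' : y * y = x⁻¹ * x⁻¹ := by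
    calc y * y = (x⁻¹ * x⁻¹) * (x * x * (y * y)) := by group
      _ = x⁻¹ * x⁻¹ := by rw [h2, mul_one]
  calc y = (y * y) * (y * y) * (y * y * y)⁻¹ := by group
    _ = (x⁻¹ * x⁻¹) * (x⁻¹ * x⁻¹) * 1⁻¹ := by rw [hy, h2']
    _ = (x * x * x)⁻¹ * x⁻¹ := by group
    _ = 1⁻¹ * x⁻¹ := by rw [hx]
    _ = x⁻¹ := by group

end VBPerfAux

/-- For `n ≥ 5`, the commutator subgroup `VB_n'` is perfect, i.e.
`VB_n'' = VB_n'`. -/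
theorem VB_commutator_perfect (n : ℕ) (hn : 5 ≤ n) :
    commutator ↥(commutator (VB n)) = ⊤ := by
  classical
  set K : Subgroup (VB n) := commutator (VB n) with hK
  set N : Subgroup (VB n) := ⁅K, K⁆ with hN
  haveI hNn : N.Normal := Subgroup.commutator_normal K K
  set π : VB n →* (VB n ⧸ N) := QuotientGroup.mk' N with hπ
  -- images of elements of K under π commute
  have hQcomm : ∀ a b : VB n, a ∈ K → b ∈ K → Commute (π a) (π b) := by
    intro a b ha hb
    have hab : ⁅a, b⁆ ∈ N := Subgroup.commutator_mem_commutator ha hb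
    rw [← commutatorElement_eq_one_iff_commute, ← map_commutatorElement]
    exact (QuotientGroup.eq_one_iff _).mpr hab
  set r : ℕ → (VB n ⧸ N) := fun i => π (vρ n i) with hr
  set s : ℕ → (VB n ⧸ N) := fun i => π (vσ n i) with hs
  -- the relations, pushed to the quotient
  have hrsq : ∀ i, 1 ≤ i → i ≤ n - 1 → r i * r i = 1 := fun i h1 h2 => by
    rw [hr]; dsimp only; rw [← map_mul, vρ_mul_self h1 h2, map_one]
  have hrbr : ∀ i, 1 ≤ i → i + 1 ≤ n - 1 →
      r i * r (i+1) * r i = r (i+1) * r i * r (i+1) := fun i h1 h2 => by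
    rw [hr]; dsimp only
    rw [← map_mul, ← map_mul, ← map_mul, ← map_mul, vρ_braid h1 h2]
  have hrfar : ∀ i j, 1 ≤ i → i + 2 ≤ j → j ≤ n - 1 → r i * r j = r j * r i :=
    fun i j h1 h2 h3 => by
    rw [hr]; dsimp only; rw [← map_mul, ← map_mul, vρ_far h1 h2 h3]
  have hmix : ∀ i, 1 ≤ i → i + 1 ≤ n - 1 →
      (r i * r (i+1)) * s i = s (i+1) * (r i * r (i+1)) := fun i h1 h2 => by
    rw [hr, hs]; dsimp only
    simp only [← map_mul]
    exact congrArg π (vρσ_mixed h1 h2)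
  -- the elements ρ_i ρ_{i+1} lie in K
  have hxK : ∀ i, 1 ≤ i → i + 1 ≤ n - 1 → vρ n i * vρ n (i+1) ∈ K := by
    intro i h1 h2
    have := prod_eq_commutator (vρ_mul_self h1 (by omega)) (vρ_mul_self (by omega) h2)
      (vρ_braid h1 h2)
    rw [this, hK, commutator_def]
    exact Subgroup.commutator_mem_commutator (Subgroup.mem_top _) (Subgroup.mem_top _)
  have hxcomm : ∀ i j, 1 ≤ i → i + 1 ≤ n - 1 → 1 ≤ j → j + 1 ≤ n - 1 →
      Commute (r i * r (i+1)) (r j * r (j+1)) := by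
    intro i j h1 h2 h3 h4
    have e1 : r i * r (i+1) = π (vρ n i * vρ n (i+1)) := by rw [hr]; dsimp only; rw [map_mul]
    have e2 : r j * r (j+1) = π (vρ n j * vρ n (j+1)) := by rw [hr]; dsimp only; rw [map_mul]
    rw [e1, e2]
    exact hQcomm _ _ (hxK i h1 h2) (hxK j h3 h4)
  have hx3 : ∀ i, 1 ≤ i → i + 1 ≤ n - 1 →
      (r i * r (i+1)) * (r i * r (i+1)) * (r i * r (i+1)) = 1 := fun i h1 h2 =>
    dihedral_cube (hrsq i h1 (by omega)) (hrsq (i+1) (by omega) h2) (hrbr i h1 h2)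
  -- far squares
  have hfsq : ∀ i j, 1 ≤ i → i + 2 ≤ j → j ≤ n - 1 → (r i * r j) * (r i * r j) = 1 := by
    intro i j h1 h2 h3
    calc (r i * r j) * (r i * r j) = r i * (r j * r i) * r j := by group
      _ = r i * (r i * r j) * r j := by rw [← hrfar i j h1 h2 h3]
      _ = (r i * r i) * (r j * r j) := by group
      _ = 1 * (r j * r j) := by rw [hrsq i h1 (by omega)]
      _ = r j * r j := by rw [one_mul]
      _ = 1 := hrsq j (by omega) h3
  -- the key step: adjacent products are inverse to each other
  have hstep : ∀ i, 1 ≤ i → i + 2 ≤ n - 1 →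
      r (i+1) * r (i+2) = (r i * r (i+1))⁻¹ := by
    intro i h1 h2
    apply cube_inv_of_sq (hx3 i h1 (by omega))
      (by have := hx3 (i+1) (by omega) (by omega)
          simpa [show i + 1 + 1 = i + 2 by omega] using this)
    · -- square condition
      have key : (r i * r (i+1)) * (r (i+1) * r (i+2)) = r i * r (i+2) := by
        calc (r i * r (i+1)) * (r (i+1) * r (i+2))
            = r i * (r (i+1) * r (i+1)) * r (i+2) := by group
          _ = r i * 1 * r (i+2) := by rw [hrsq (i+1) (by omega) (by omega)]
          _ = r i * r (i+2) := by rw [mul_one]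
      rw [key]
      exact hfsq i (i+2) h1 (by omega) (by omega)
    · -- commuting condition
      have := hxcomm i (i+1) h1 (by omega) (by omega) (by omega)
      simpa [show i + 1 + 1 = i + 2 by omega] using this.eq
  -- x₁ = 1
  have hx1 : r 1 * r 2 = 1 := by
    have e2 : r 2 * r 3 = (r 1 * r 2)⁻¹ := hstep 1 (by omega) (by omega)
    have e3 : r 3 * r 4 = (r 2 * r 3)⁻¹ := hstep 2 (by omega) (by omega)
    have tele : (r 1 * r 2) * ((r 2 * r 3) * (r 3 * r 4)) = r 1 * r 4 := by
      calc (r 1 * r 2) * ((r 2 * r 3) * (r 3 * r 4))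
          = r 1 * (r 2 * r 2) * (r 3 * r 3) * r 4 := by group
        _ = r 1 * 1 * (r 3 * r 3) * r 4 := by rw [hrsq 2 (by omega) (by omega)]
        _ = r 1 * 1 * 1 * r 4 := by rw [hrsq 3 (by omega) (by omega)]
        _ = r 1 * r 4 := by group
    have h14 : r 1 * r 4 = r 1 * r 2 := by
      rw [← tele, e3, e2]; group
    have hsq12 : (r 1 * r 2) * (r 1 * r 2) = 1 := by
      rw [← h14]; exact hfsq 1 4 (by omega) (by omega) (by omega)
    have hcube := hx3 1 (by omega) (by omega)
    calc r 1 * r 2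
        = ((r 1 * r 2) * (r 1 * r 2) * (r 1 * r 2)) * ((r 1 * r 2) * (r 1 * r 2))⁻¹ := by
          group
      _ = 1 * (1 : VB n ⧸ N)⁻¹ := by rw [hcube, hsq12]
      _ = 1 := by group
  -- all adjacent products are trivial
  have hxall : ∀ i, 1 ≤ i → i + 1 ≤ n - 1 → r i * r (i+1) = 1 := by
    intro i
    induction i with
    | zero => intro h1 _; exact absurd h1 (by omega)
    | succ i ih =>
      intro h1 h2
      rcases Nat.eq_zero_or_pos i with h0 | hpos
      · subst h0; exact hx1
      · have hs' := hstep i hpos (by omega)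
        have hi := ih hpos (by omega)
        have : r (i+1) * r (i+2) = 1 := by rw [hs', hi, inv_one]
        simpa [show i + 1 + 1 = i + 2 by omega] using this
  -- all r's are equal
  have hreq : ∀ i, 1 ≤ i → i ≤ n - 1 → r i = r 1 := by
    intro i
    induction i with
    | zero => intro h1 _; exact absurd h1 (by omega)
    | succ i ih =>
      intro h1 h2
      rcases Nat.eq_zero_or_pos i with h0 | hpos
      · subst h0; rfl
      · have hx := hxall i hpos (by omega)
        have hri : r (i+1) = (r i)⁻¹ := by
          have := inv_eq_of_mul_eq_one_right hx; rw [← this]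
        have hinv : (r i)⁻¹ = r i := inv_eq_of_mul_eq_one_left (hrsq i hpos (by omega))
        rw [hri, hinv, ih hpos (by omega)]
  -- all s's are equal
  have hseq : ∀ i, 1 ≤ i → i ≤ n - 1 → s i = s 1 := by
    intro i
    induction i with
    | zero => intro h1 _; exact absurd h1 (by omega)
    | succ i ih =>
      intro h1 h2
      rcases Nat.eq_zero_or_pos i with h0 | hpos
      · subst h0; rfl
      · have hm := hmix i hpos (by omega)
        rw [hxall i hpos (by omega), one_mul, mul_one] at hm
        rw [← hm, ih hpos (by omega)]
  -- s 1 commutes with r 1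
  have hsr : Commute (s 1) (r 1) := by
    have h := vσρ_far (n := n) (i := 1) (j := 3) (by omega) (by omega) (by omega)
    have h' : s 1 * r 3 = r 3 * s 1 := by
      rw [hr, hs]; dsimp only; rw [← map_mul, ← map_mul, h]
    have h3 : r 3 = r 1 := hreq 3 (by omega) (by omega)
    rw [h3] at h'
    exact h'
  -- image of every generator is s 1 or r 1
  have hgen : ∀ g : VBGen n, π (PresentedGroup.of g) = s 1 ∨ π (PresentedGroup.of g) = r 1 := by
    rintro (⟨k, hk⟩ | ⟨k, hk⟩)
    · left
      have hf : fσ n (k+1) = FreeGroup.of (Sum.inl ⟨k, hk⟩) := by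
        unfold fσ
        rw [dif_pos ⟨by omega, by simpa using hk⟩]
        rfl
      have : π (PresentedGroup.of (rels := vbRels n) (Sum.inl ⟨k, hk⟩)) = s (k+1) := by
        rw [hs]; dsimp only
        rw [vσ, hf]
        rfl
      rw [this]
      exact hseq (k+1) (by omega) (by omega)
    · right
      have hf : fρ n (k+1) = FreeGroup.of (Sum.inr ⟨k, hk⟩) := by
        unfold fρ
        rw [dif_pos ⟨by omega, by simpa using hk⟩]
        rfl
      have : π (PresentedGroup.of (rels := vbRels n) (Sum.inr ⟨k, hk⟩)) = r (k+1) := by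
        rw [hr]; dsimp only
        rw [vρ, hf]
        rfl
      rw [this]
      exact hreq (k+1) (by omega) (by omega)
  -- images of any two generators commute
  have hpair : ∀ g g' : VBGen n, Commute (π (PresentedGroup.of g)) (π (PresentedGroup.of g')) := by
    intro g g'
    rcases hgen g with h | h <;> rcases hgen g' with h' | h' <;> rw [h, h'] <;>
      first
        | exact hsr
        | exact hsr.symm
        | exact Commute.refl (s 1)
        | exact Commute.refl (r 1)
  -- the quotient is abelian
  have hgc : ∀ (g : VBGen n) (q : VB n ⧸ N), Commute (π (PresentedGroup.of g)) q := by
    intro g q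
    obtain ⟨y, rfl⟩ := QuotientGroup.mk'_surjective N q
    have hmem : y ∈ (Subgroup.centralizer {π (PresentedGroup.of g)}).comap π := by
      refine PresentedGroup.generated_by (vbRels n) _ (fun j => ?_) y
      refine Subgroup.mem_comap.mpr (Subgroup.mem_centralizer_iff.mpr ?_)
      rintro h ⟨rfl⟩
      exact hpair g j
    have := Subgroup.mem_centralizer_iff.mp (Subgroup.mem_comap.mp hmem)
      (π (PresentedGroup.of g)) rfl
    exact this
  have habel : ∀ a b : VB n, Commute (π a) (π b) := by
    have hcent : ∀ q : VB n ⧸ N, q ∈ Subgroup.center (VB n ⧸ N) := by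
      intro q
      obtain ⟨y, rfl⟩ := QuotientGroup.mk'_surjective N q
      refine PresentedGroup.generated_by (vbRels n) ((Subgroup.center _).comap π)
        (fun j => ?_) y
      exact Subgroup.mem_comap.mpr (Subgroup.mem_center_iff.mpr fun q => ((hgc j q).symm).eq)
    intro a b
    exact (Subgroup.mem_center_iff.mp (hcent (π b)) (π a))
  -- hence K ≤ N
  have hKN : K ≤ N := by
    rw [hK, commutator_def]
    refine Subgroup.commutator_le.mpr fun p _ q _ => ?_
    have h1 : π ⁅p, q⁆ = 1 := by
      rw [map_commutatorElement]
      exact commutatorElement_eq_one_iff_commute.mpr (habel p q)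
    exact (QuotientGroup.eq_one_iff _).mp h1
  have hNK : N ≤ K := Subgroup.commutator_le_left K K
  have hNKeq : (⁅K, K⁆ : Subgroup (VB n)) = K := le_antisymm hNK hKN
  -- conclude
  have hmap : Subgroup.map K.subtype (commutator ↥K) = Subgroup.map K.subtype ⊤ := by
    calc Subgroup.map K.subtype (commutator ↥K)
        = ⁅Subgroup.map K.subtype ⊤, Subgroup.map K.subtype ⊤⁆ := by
          rw [commutator_def, Subgroup.map_commutator]
      _ = ⁅K, K⁆ := by rw [← MonoidHom.range_eq_map, Subgroup.range_subtype]
      _ = K := hNKeq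
      _ = Subgroup.map K.subtype ⊤ := by rw [← MonoidHom.range_eq_map, Subgroup.range_subtype]
  exact Subgroup.map_injective K.subtype_injective hmap
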